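/- arXiv:0901.2317 — 2 statements merged into one kernel-verified Lean document; each statement's English description precedes it below -/
import Mathlib

section
/- Let ∂ be a ℤ-linear map from chains on S to chains on T. Every chain A : S →₀ ℤ can be written as a finite sum A = B₁ + ⋯ + Bₙ in which each Bᵢ is a nonzero connected component of A, and moreover ‖A‖ = ‖B₁‖ + ⋯ + ‖Bₙ‖ and ‖∂A‖ = ‖∂B₁‖ + ⋯ + ‖∂Bₙ‖. Consequently, if ∂A = 0 then ∂Bᵢ = 0 for every i. -/
/-- The volume of a chain `A : S →₀ ℤ`: the sum of the absolute values of its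
coefficients. -/
def vol {S : Type*} (A : S →₀ ℤ) : ℕ := ∑ s ∈ A.support, (A s).natAbs

/-- `B` is a subchain of `A` when `‖A‖ = ‖B‖ + ‖A - B‖`. -/
def Subchain {S : Type*} (B A : S →₀ ℤ) : Prop := vol A = vol B + vol (A - B)

/-- Given a boundary map `d`, `B` is a component of `A` if `B` is a subchain of `A`
and `d B` is a subchain of `d A`. -/
def Component {S T : Type*} (d : (S →₀ ℤ) →ₗ[ℤ] (T →₀ ℤ)) (B A : S →₀ ℤ) : Prop :=
  Subchain B A ∧ Subchain (d B) (d A)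

/-- A chain is connected if its only components are `0` and itself. -/
def Connected {S T : Type*} (d : (S →₀ ℤ) →ₗ[ℤ] (T →₀ ℤ)) (A : S →₀ ℤ) : Prop :=
  ∀ B : S →₀ ℤ, Component d B A → B = 0 ∨ B = A

/-! Splitting off a proper nonzero component `B` of `A` strictly lowers the volume on both
sides, and `A - B` is again a component; so strong induction on `‖A‖` decomposes `A` into
connected components, which stay components of `A` by transitivity. Additivity of the
volumes is the defining equation of a subchain, summed along the splitting tree. -/

section Volume

variable {S : Type*}

lemma vol_eq_sum_of_support_subset {A : S →₀ ℤ} {t : Finset S} (h : A.support ⊆ t) :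
    vol A = ∑ s ∈ t, (A s).natAbs :=
  Finset.sum_subset h fun s _ hs => by simp [Finsupp.notMem_support_iff.mp hs]

@[simp]
lemma vol_zero : vol (0 : S →₀ ℤ) = 0 := by simp [vol]

lemma vol_eq_zero_iff {A : S →₀ ℤ} : vol A = 0 ↔ A = 0 := by
  simp [vol, Finset.sum_eq_zero_iff, Finsupp.ext_iff]

lemma vol_add_le (A B : S →₀ ℤ) : vol (A + B) ≤ vol A + vol B := by
  classical
  rw [vol_eq_sum_of_support_subset Finsupp.support_add,
    vol_eq_sum_of_support_subset (Finset.subset_union_left (s₂ := B.support)),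
    vol_eq_sum_of_support_subset (Finset.subset_union_right (s₁ := A.support)),
    ← Finset.sum_add_distrib]
  exact Finset.sum_le_sum fun s _ => Int.natAbs_add_le (A s) (B s)

end Volume

namespace Subchain

variable {S : Type*} {A B C : S →₀ ℤ}

lemma refl (A : S →₀ ℤ) : Subchain A A := by simp [Subchain]

lemma sub (h : Subchain B A) : Subchain (A - B) A := by
  rw [Subchain, sub_sub_cancel, add_comm]
  exact h

lemma trans (hCB : Subchain C B) (hBA : Subchain B A) : Subchain C A := by
  have hA : vol A ≤ vol C + vol (A - C) := by
    simpa using vol_add_le C (A - C)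
  have hAC : vol (A - C) ≤ vol (B - C) + vol (A - B) := by
    simpa using vol_add_le (B - C) (A - B)
  unfold Subchain at hCB hBA ⊢
  omega

lemma eq_zero (h : Subchain B 0) : B = 0 := by
  rw [Subchain, vol_zero] at h
  exact vol_eq_zero_iff.mp (by omega)

lemma vol_lt (h : Subchain B A) (hBA : B ≠ A) : vol B < vol A := by
  have : vol (A - B) ≠ 0 := vol_eq_zero_iff.not.mpr (sub_ne_zero.mpr hBA.symm)
  rw [h]
  omega

end Subchain

namespace Component

variable {S T : Type*} {d : (S →₀ ℤ) →ₗ[ℤ] (T →₀ ℤ)} {A B C : S →₀ ℤ}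

lemma refl (d : (S →₀ ℤ) →ₗ[ℤ] (T →₀ ℤ)) (A : S →₀ ℤ) : Component d A A :=
  ⟨Subchain.refl A, Subchain.refl (d A)⟩

lemma sub (h : Component d B A) : Component d (A - B) A :=
  ⟨h.1.sub, by simpa only [map_sub] using h.2.sub⟩

lemma trans (hCB : Component d C B) (hBA : Component d B A) : Component d C A :=
  ⟨hCB.1.trans hBA.1, hCB.2.trans hBA.2⟩

lemma map_eq_zero (h : Component d B A) (hA : d A = 0) : d B = 0 :=
  Subchain.eq_zero (hA ▸ h.2)

end Component

structure IsConnectedDecomposition {S T : Type*} (d : (S →₀ ℤ) →ₗ[ℤ] (T →₀ ℤ))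
    (A : S →₀ ℤ) {n : ℕ} (B : Fin n → S →₀ ℤ) : Prop where
  sum_eq : A = ∑ i, B i
  ne_zero : ∀ i, B i ≠ 0
  connected : ∀ i, Connected d (B i)
  component : ∀ i, Component d (B i) A
  vol_eq : vol A = ∑ i, vol (B i)
  vol_map_eq : vol (d A) = ∑ i, vol (d (B i))

namespace IsConnectedDecomposition

variable {S T : Type*} {d : (S →₀ ℤ) →ₗ[ℤ] (T →₀ ℤ)} {A B : S →₀ ℤ}

lemma zero (d : (S →₀ ℤ) →ₗ[ℤ] (T →₀ ℤ)) :
    IsConnectedDecomposition d 0 (Fin.elim0 : Fin 0 → S →₀ ℤ) :=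
  ⟨by simp, nofun, nofun, nofun, by simp, by simp⟩

lemma single (hA₀ : A ≠ 0) (hA : Connected d A) :
    IsConnectedDecomposition d A fun _ : Fin 1 => A :=
  ⟨by simp, fun _ => hA₀, fun _ => hA, fun _ => Component.refl d A, by simp, by simp⟩

lemma append (hB : Component d B A) {m n : ℕ} {P : Fin m → S →₀ ℤ} {Q : Fin n → S →₀ ℤ}
    (hP : IsConnectedDecomposition d B P) (hQ : IsConnectedDecomposition d (A - B) Q) :
    IsConnectedDecomposition d A (Fin.append P Q) where
  sum_eq := by
    simp only [Fin.sum_univ_add, Fin.append_left, Fin.append_right, ← hP.sum_eq, ← hQ.sum_eq,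
      add_sub_cancel]
  ne_zero := Fin.addCases (by simpa using hP.ne_zero) (by simpa using hQ.ne_zero)
  connected := Fin.addCases (by simpa using hP.connected) (by simpa using hQ.connected)
  component := Fin.addCases (by simpa using fun i => (hP.component i).trans hB)
    (by simpa using fun i => (hQ.component i).trans hB.sub)
  vol_eq := by
    simp only [Fin.sum_univ_add, Fin.append_left, Fin.append_right, ← hP.vol_eq, ← hQ.vol_eq]
    exact hB.1
  vol_map_eq := by
    simp only [Fin.sum_univ_add, Fin.append_left, Fin.append_right, ← hP.vol_map_eq,
      ← hQ.vol_map_eq, map_sub]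
    exact hB.2

end IsConnectedDecomposition

theorem exists_isConnectedDecomposition {S T : Type*} (d : (S →₀ ℤ) →ₗ[ℤ] (T →₀ ℤ))
    (A : S →₀ ℤ) : ∃ (n : ℕ) (B : Fin n → S →₀ ℤ), IsConnectedDecomposition d A B := by
  induction hA : vol A using Nat.strong_induction_on generalizing A with
  | _ v ih =>
    subst hA
    by_cases hA₀ : A = 0
    · exact hA₀ ▸ ⟨0, _, .zero d⟩
    by_cases hconn : Connected d A
    · exact ⟨1, _, .single hA₀ hconn⟩
    obtain ⟨B, hB, hB₀, hBA⟩ : ∃ B, Component d B A ∧ B ≠ 0 ∧ B ≠ A := by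
      simpa [Connected, not_or] using hconn
    obtain ⟨m, P, hP⟩ := ih (vol B) (hB.1.vol_lt hBA) B rfl
    obtain ⟨n, Q, hQ⟩ := ih (vol (A - B)) (hB.sub.1.vol_lt (by simpa using hB₀)) (A - B) rfl
    exact ⟨m + n, _, .append hB hP hQ⟩

/-- Every chain decomposes as a finite sum of nonzero connected components, with
additivity of volumes and boundary volumes; in particular if `d A = 0` then each
component is a cycle. -/
theorem exists_connected_component_decomposition {S T : Type*}
    (d : (S →₀ ℤ) →ₗ[ℤ] (T →₀ ℤ)) (A : S →₀ ℤ) :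
    ∃ (n : ℕ) (B : Fin n → (S →₀ ℤ)),
      A = ∑ i, B i ∧
      (∀ i, B i ≠ 0) ∧
      (∀ i, Connected d (B i)) ∧
      (∀ i, Component d (B i) A) ∧
      vol A = ∑ i, vol (B i) ∧
      vol (d A) = ∑ i, vol (d (B i)) ∧
      (d A = 0 → ∀ i, d (B i) = 0) := by
  obtain ⟨n, B, hB⟩ := exists_isConnectedDecomposition d A
  exact ⟨n, B, hB.sum_eq, hB.ne_zero, hB.connected, hB.component, hB.vol_eq, hB.vol_map_eq,
    fun hdA i => (hB.component i).map_eq_zero hdA⟩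
end

section
/- Let ∂ be a ℤ-linear map from chains on S to chains on T such that for every t ∈ T the set { s ∈ S : t lies in the support of ∂δ_s } is finite. Then for every s₀ ∈ S and every n ∈ ℕ, the set of connected chains A with ‖A‖ ≤ n whose support contains s₀ is finite. -/
/-! Call two cells adjacent when the boundaries of their elementary chains share a cell.
If `C` is closed under adjacency inside the support of `A`, then `A` splits into its parts on
`C` and off `C`, which have disjoint supports, and so do their boundaries: the part on `C` is a
component. Hence the support of a connected chain `A` through `s₀` is reached from `s₀` in at
most `#supp A ≤ ‖A‖` adjacency steps. By local finiteness these balls are finite, and only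
finitely many chains supported in a finite set have bounded volume. -/

open Finsupp

lemma Finset.exists_eq_succ_of_monotone {α : Type*} {f : ℕ → Finset α} (hf : Monotone f)
    {P : Finset α} (hP : ∀ k, f k ⊆ P) : ∃ k ≤ P.card, f k = f (k + 1) := by
  by_contra! hne
  have hcard : ∀ k ≤ P.card + 1, k ≤ (f k).card := by
    intro k hk
    induction k with
    | zero => exact Nat.zero_le _
    | succ k ih =>
      have hlt : (f k).card < (f (k + 1)).card :=
        Finset.card_lt_card <| (hf k.le_succ).ssubset_of_ne (hne k (by omega))
      have := ih (by omega)
      omega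
  have := (hcard _ le_rfl).trans (Finset.card_le_card (hP _))
  omega

section Volume

variable {S : Type*}

lemma vol_eq_sum (A : S →₀ ℤ) : vol A = A.sum fun _ c => c.natAbs := rfl

lemma vol_add_of_disjoint {A B : S →₀ ℤ} (h : Disjoint A.support B.support) :
    vol (A + B) = vol A + vol B := by
  simp only [vol_eq_sum, sum_add_index_of_disjoint h]

lemma subchain_of_disjoint {B A : S →₀ ℤ} (h : Disjoint B.support (A - B).support) :
    Subchain B A := by
  rw [Subchain, ← vol_add_of_disjoint h, add_sub_cancel]

lemma natAbs_le_vol (A : S →₀ ℤ) (s : S) : (A s).natAbs ≤ vol A := by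
  simpa [vol_eq_sum, sum_single_index] using A.single_le_sum (g := fun _ c => c.natAbs)
    (fun _ _ => Nat.zero_le _) s

lemma card_support_le_vol (A : S →₀ ℤ) : A.support.card ≤ vol A :=
  (Finset.card_eq_sum_ones _).trans_le <|
    Finset.sum_le_sum fun _ hs => Int.natAbs_pos.mpr (mem_support_iff.mp hs)

lemma finite_setOf_support_subset_vol_le {F : Set S} (hF : F.Finite) (n : ℕ) :
    {A : S →₀ ℤ | ↑A.support ⊆ F ∧ vol A ≤ n}.Finite := by
  refine (hF.toFinset.finsupp fun _ => Finset.Icc (-(n : ℤ)) n).finite_toSet.subset ?_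
  rintro A ⟨hsupp, hvol⟩
  refine Finset.mem_finsupp_iff.mpr ⟨by simpa using hsupp, fun s _ => ?_⟩
  have := (natAbs_le_vol A s).trans hvol
  rw [Finset.mem_Icc]
  omega

end Volume

section Adjacency

variable {S T : Type*} (d : (S →₀ ℤ) →ₗ[ℤ] (T →₀ ℤ))

def CellAdj (s s' : S) : Prop :=
  ∃ t, t ∈ (d (single s 1)).support ∧ t ∈ (d (single s' 1)).support

lemma support_map_subset_biUnion [DecidableEq T] (A : S →₀ ℤ) :
    (d A).support ⊆ A.support.biUnion fun s => (d (single s 1)).support := by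
  conv_lhs => rw [← A.sum_single]
  rw [map_finsuppSum]
  refine support_sum.trans (Finset.biUnion_mono fun s _ => ?_)
  rw [← smul_single_one, map_zsmul]
  exact support_smul

lemma disjoint_support_map {B B' : S →₀ ℤ}
    (h : ∀ s ∈ B.support, ∀ s' ∈ B'.support, ¬CellAdj d s s') :
    Disjoint (d B).support (d B').support := by
  classical
  refine Finset.disjoint_left.mpr fun t ht ht' => ?_
  obtain ⟨s, hs, hts⟩ := Finset.mem_biUnion.mp (support_map_subset_biUnion d B ht)
  obtain ⟨s', hs', hts'⟩ := Finset.mem_biUnion.mp (support_map_subset_biUnion d B' ht')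
  exact h s hs s' hs' ⟨t, hts, hts'⟩

lemma component_filter_of_closed {A : S →₀ ℤ} {C : Set S} [DecidablePred (· ∈ C)]
    (hC : ∀ s ∈ A.support, s ∈ C → ∀ s' ∈ A.support, CellAdj d s s' → s' ∈ C) :
    Component d (A.filter (· ∈ C)) A := by
  have hsub : A - A.filter (· ∈ C) = A.filter (· ∉ C) :=
    sub_eq_of_eq_add' (filter_add_filter_not A (· ∈ C)).symm
  refine ⟨subchain_of_disjoint ?_, subchain_of_disjoint ?_⟩
  · rw [hsub]
    exact Finset.disjoint_filter_filter_not _ _ _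
  · rw [← map_sub, hsub]
    refine disjoint_support_map d fun s hs s' hs' hadj => ?_
    rw [support_filter, Finset.mem_filter] at hs hs'
    exact hs'.2 (hC s hs.1 hs.2 s' hs'.1 hadj)

def cellBall (s₀ : S) : ℕ → Set S
  | 0 => {s₀}
  | k + 1 => cellBall s₀ k ∪ {s' | ∃ s ∈ cellBall s₀ k, CellAdj d s s'}

lemma cellBall_mono (s₀ : S) : Monotone (cellBall d s₀) :=
  monotone_nat_of_le_succ fun _ => Set.subset_union_left

lemma mem_cellBall_self (s₀ : S) (k : ℕ) : s₀ ∈ cellBall d s₀ k :=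
  cellBall_mono d s₀ (Nat.zero_le k) rfl

lemma cellBall_finite (hloc : ∀ t : T, {s : S | t ∈ (d (single s 1)).support}.Finite)
    (s₀ : S) (k : ℕ) : (cellBall d s₀ k).Finite := by
  induction k with
  | zero => exact Set.finite_singleton s₀
  | succ k ih =>
    refine ih.union <| (ih.biUnion fun s _ =>
      (d (single s 1)).support.finite_toSet.biUnion fun t _ => hloc t).subset ?_
    rintro s' ⟨s, hs, t, ht, ht'⟩
    simp only [Set.mem_iUnion]
    exact ⟨s, hs, t, ht, ht'⟩

variable {d}

lemma Connected.support_subset_of_closed {A : S →₀ ℤ} (hA : Connected d A) {C : Set S}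
    {s₀ : S} (hs₀ : s₀ ∈ A.support) (hs₀C : s₀ ∈ C)
    (hC : ∀ s ∈ A.support, s ∈ C → ∀ s' ∈ A.support, CellAdj d s s' → s' ∈ C) :
    ↑A.support ⊆ C := by
  classical
  rcases hA _ (component_filter_of_closed d hC) with h | h
  · exact absurd ((filter_eq_zero_iff _ _).mp h s₀ hs₀C) (mem_support_iff.mp hs₀)
  · exact fun s hs => (filter_eq_self_iff _ _).mp h s (mem_support_iff.mp hs)

lemma Connected.support_subset_cellBall {A : S →₀ ℤ} (hA : Connected d A) {s₀ : S}
    (hs₀ : s₀ ∈ A.support) :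
    ↑A.support ⊆ cellBall d s₀ A.support.card := by
  classical
  obtain ⟨k, hk, hstable⟩ := Finset.exists_eq_succ_of_monotone
    (f := fun k => {s ∈ A.support | s ∈ cellBall d s₀ k})
    (fun _ _ hjk => A.support.monotone_filter_right fun _ _ hs => cellBall_mono d s₀ hjk hs)
    (fun _ => Finset.filter_subset _ _)
  refine (hA.support_subset_of_closed hs₀ (mem_cellBall_self d s₀ k) ?_).trans
    (cellBall_mono d s₀ hk)
  intro s _ hsk s' hs' hadj
  have : s' ∈ {s ∈ A.support | s ∈ cellBall d s₀ (k + 1)} :=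
    Finset.mem_filter.mpr ⟨hs', Or.inr ⟨s, hsk, hadj⟩⟩
  rw [← hstable, Finset.mem_filter] at this
  exact this.2

end Adjacency

/-- If the boundary map is locally finite (each `(q-1)`-cell `t` bounds only finitely
many cells of `S`), then there are only finitely many connected chains of volume at
most `n` whose support contains a given cell `s₀`. -/
theorem connected_chains_through_cell_finite {S T : Type*}
    (d : (S →₀ ℤ) →ₗ[ℤ] (T →₀ ℤ))
    (hloc : ∀ t : T, {s : S | t ∈ (d (Finsupp.single s 1)).support}.Finite)
    (s₀ : S) (n : ℕ) :
    {A : S →₀ ℤ | Connected d A ∧ vol A ≤ n ∧ s₀ ∈ A.support}.Finite := by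
  refine (finite_setOf_support_subset_vol_le (cellBall_finite d hloc s₀ n) n).subset ?_
  rintro A ⟨hA, hvol, hs₀⟩
  have hcard := (card_support_le_vol A).trans hvol
  exact ⟨(hA.support_subset_cellBall hs₀).trans (cellBall_mono d s₀ hcard), hvol⟩
end
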